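/- Let k, γ, ε be real numbers with ε ≥ 0. Let M : ℝ → (6×6 real matrices) be a differentiable matrix-valued function such that M(t) is symmetric and invertible for every t and |xᵀ M'(t) x| ≤ γ‖x‖² for all t and x ∈ ℝ⁶. Let Δ : ℝ → ℝ⁶ satisfy ‖Δ(t)‖ ≤ ε for all t, and let e : ℝ → ℝ⁶ be differentiable with e'(t) = -k · M(t)⁻¹ · e(t) - k · M(t)⁻¹ · Δ(t) for all t, where k > 0. Then the Lyapunov function V(t) = e(t)ᵀ M(t) e(t) satisfies V'(t) ≤ -(2k - γ)‖e(t)‖² + 2kε‖e(t)‖ for all t; in particular, if 2k > γ, then V'(t) < 0 at every time t at which ‖e(t)‖ > 2kε/(2k - γ). -/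

import Mathlib

/-!
Differentiating `V = eᵀ M e` gives `V' = 2 e'ᵀ M e + eᵀ M' e`, the two `e'`-terms being equal
because `M` is symmetric. Along the dynamics `M` cancels `M⁻¹` in `e'ᵀ M e`, so
`V' = -2k ‖e‖² - 2k Δᵀe + eᵀ M' e`; the last term is at most `γ ‖e‖²` and, by Cauchy–Schwarz,
`-Δᵀe ≤ ε ‖e‖`. The second claim is the sign of `r (2kε - (2k - γ) r)` for `r > 2kε / (2k - γ)`.
-/

open Matrix

/-- Euclidean norm of a vector in `ℝⁿ` (identified with `Fin n → ℝ`). -/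
noncomputable def eNorm {n : ℕ} (x : Fin n → ℝ) : ℝ := Real.sqrt (x ⬝ᵥ x)

noncomputable def matDeriv {n : ℕ} (M : ℝ → Matrix (Fin n) (Fin n) ℝ) (t : ℝ) :
    Matrix (Fin n) (Fin n) ℝ :=
  Matrix.of fun i j => deriv (fun s => M s i j) t

section EuclideanNorm

variable {n : ℕ}

lemma eNorm_eq_norm_toLp (x : Fin n → ℝ) : eNorm x = ‖WithLp.toLp 2 x‖ := by
  rw [eNorm, norm_eq_sqrt_real_inner, EuclideanSpace.inner_toLp_toLp, star_trivial]

lemma eNorm_nonneg (x : Fin n → ℝ) : 0 ≤ eNorm x := Real.sqrt_nonneg _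

lemma sq_eNorm (x : Fin n → ℝ) : eNorm x ^ 2 = x ⬝ᵥ x := by
  rw [eNorm_eq_norm_toLp, ← real_inner_self_eq_norm_sq, EuclideanSpace.inner_toLp_toLp,
    star_trivial]

lemma abs_dotProduct_le_eNorm_mul_eNorm (x y : Fin n → ℝ) : |x ⬝ᵥ y| ≤ eNorm x * eNorm y := by
  simpa only [eNorm_eq_norm_toLp, EuclideanSpace.inner_toLp_toLp, star_trivial,
    dotProduct_comm y x] using abs_real_inner_le_norm (WithLp.toLp 2 x) (WithLp.toLp 2 y)

end EuclideanNorm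

section Symmetric

variable {ι R : Type*} [Fintype ι] [CommRing R] {A : Matrix ι ι R}

lemma Matrix.IsSymm.dotProduct_mulVec_comm (hA : A.IsSymm) (v w : ι → R) :
    v ⬝ᵥ A *ᵥ w = w ⬝ᵥ A *ᵥ v := by
  rw [dotProduct_mulVec, ← mulVec_transpose, hA.eq, dotProduct_comm]

lemma Matrix.IsSymm.nonsing_inv_mulVec_dotProduct_mulVec [DecidableEq ι] (hA : A.IsSymm)
    (hdet : IsUnit A.det) (v w : ι → R) : A⁻¹ *ᵥ v ⬝ᵥ A *ᵥ w = v ⬝ᵥ w := by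
  rw [hA.dotProduct_mulVec_comm, mulVec_mulVec, mul_nonsing_inv _ hdet, one_mulVec,
    dotProduct_comm]

end Symmetric

section Derivatives

variable {m n : Type*} [Fintype n] {t : ℝ}

theorem HasDerivAt.dotProduct {u v : ℝ → n → ℝ} {u' v' : n → ℝ} (hu : HasDerivAt u u' t)
    (hv : HasDerivAt v v' t) : HasDerivAt (fun s => u s ⬝ᵥ v s) (u' ⬝ᵥ v t + u t ⬝ᵥ v') t := by
  simpa only [_root_.dotProduct, ← Finset.sum_add_distrib] using
    HasDerivAt.fun_sum fun i _ => (hasDerivAt_pi.mp hu i).fun_mul (hasDerivAt_pi.mp hv i)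

theorem HasDerivAt.mulVec {A : ℝ → Matrix m n ℝ} {A' : Matrix m n ℝ} {v : ℝ → n → ℝ}
    {v' : n → ℝ} (hA : ∀ i j, HasDerivAt (fun s => A s i j) (A' i j) t)
    (hv : HasDerivAt v v' t) : HasDerivAt (fun s => A s *ᵥ v s) (A' *ᵥ v t + A t *ᵥ v') t :=
  hasDerivAt_pi.mpr fun i => (hasDerivAt_pi.mpr (hA i)).dotProduct hv

theorem HasDerivAt.dotProduct_mulVec_self {A : ℝ → Matrix n n ℝ} {A' : Matrix n n ℝ}
    {v : ℝ → n → ℝ} {v' : n → ℝ} (hA : ∀ i j, HasDerivAt (fun s => A s i j) (A' i j) t)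
    (hsymm : (A t).IsSymm) (hv : HasDerivAt v v' t) :
    HasDerivAt (fun s => v s ⬝ᵥ A s *ᵥ v s) (2 * (v' ⬝ᵥ A t *ᵥ v t) + v t ⬝ᵥ A' *ᵥ v t) t := by
  convert hv.dotProduct (HasDerivAt.mulVec hA hv) using 1
  rw [dotProduct_add, hsymm.dotProduct_mulVec_comm (v t) v']
  ring

end Derivatives

lemma hasDerivAt_matDeriv {n : ℕ} {M : ℝ → Matrix (Fin n) (Fin n) ℝ}
    (hM : ∀ i j, Differentiable ℝ fun t => M t i j) (t : ℝ) (i j : Fin n) :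
    HasDerivAt (fun s => M s i j) (matDeriv M t i j) t :=
  (hM i j t).hasDerivAt

lemma deriv_lyapunov_eq {n : ℕ} {k : ℝ} {M : ℝ → Matrix (Fin n) (Fin n) ℝ}
    (hMdiff : ∀ i j, Differentiable ℝ fun t => M t i j) {Δ e : ℝ → Fin n → ℝ}
    (he : Differentiable ℝ e) {t : ℝ} (hMsymm : (M t).IsSymm) (hMinv : IsUnit (M t).det)
    (hdyn : deriv e t = (-k) • (M t)⁻¹ *ᵥ e t - k • (M t)⁻¹ *ᵥ Δ t) :
    deriv (fun s => e s ⬝ᵥ M s *ᵥ e s) t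
      = -2 * k * (e t ⬝ᵥ e t) - 2 * k * (Δ t ⬝ᵥ e t) + e t ⬝ᵥ matDeriv M t *ᵥ e t := by
  have hdot : deriv e t ⬝ᵥ M t *ᵥ e t = -k * (e t ⬝ᵥ e t) - k * (Δ t ⬝ᵥ e t) := by
    rw [hdyn, sub_dotProduct, smul_dotProduct, smul_dotProduct,
      hMsymm.nonsing_inv_mulVec_dotProduct_mulVec hMinv,
      hMsymm.nonsing_inv_mulVec_dotProduct_mulVec hMinv, smul_eq_mul, smul_eq_mul]
  rw [(HasDerivAt.dotProduct_mulVec_self (hasDerivAt_matDeriv hMdiff t) hMsymm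
    (he t).hasDerivAt).deriv, hdot]
  ring

lemma neg_mul_sq_add_mul_neg {a c r : ℝ} (ha : 0 < a) (hc : 0 ≤ c) (hr : c / a < r) :
    -a * r ^ 2 + c * r < 0 := by
  have hr₀ : 0 < r := (div_nonneg hc ha.le).trans_lt hr
  have hcr : c < a * r := by rwa [div_lt_iff₀ ha, mul_comm] at hr
  nlinarith

theorem lyapunov_robustness_estimate_general
    (k γ ε : ℝ) (hk : 0 < k)
    (M : ℝ → Matrix (Fin 6) (Fin 6) ℝ)
    (hMdiff : ∀ i j, Differentiable ℝ fun t => M t i j)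
    (hMsymm : ∀ t, (M t).IsSymm)
    (hMinv : ∀ t, IsUnit (M t).det)
    (hMrate : ∀ t, ∀ x : Fin 6 → ℝ, |x ⬝ᵥ (matDeriv M t).mulVec x| ≤ γ * eNorm x ^ 2)
    (Δ : ℝ → Fin 6 → ℝ) (hΔ : ∀ t, eNorm (Δ t) ≤ ε)
    (e : ℝ → Fin 6 → ℝ) (he : Differentiable ℝ e)
    (hdyn : ∀ t, deriv e t = (-k) • (M t)⁻¹.mulVec (e t) - k • (M t)⁻¹.mulVec (Δ t)) :
    (∀ t, deriv (fun s => e s ⬝ᵥ (M s).mulVec (e s)) t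
        ≤ -(2 * k - γ) * eNorm (e t) ^ 2 + 2 * k * ε * eNorm (e t)) ∧
    (2 * k > γ → ∀ t, eNorm (e t) > 2 * k * ε / (2 * k - γ) →
        deriv (fun s => e s ⬝ᵥ (M s).mulVec (e s)) t < 0) := by
  have hbound : ∀ t, deriv (fun s => e s ⬝ᵥ (M s).mulVec (e s)) t
      ≤ -(2 * k - γ) * eNorm (e t) ^ 2 + 2 * k * ε * eNorm (e t) := by
    intro t
    have hrate := (le_abs_self _).trans (hMrate t (e t))
    have hdisturbance : -(Δ t ⬝ᵥ e t) ≤ ε * eNorm (e t) :=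
      (neg_le_abs _).trans <| (abs_dotProduct_le_eNorm_mul_eNorm _ _).trans <|
        mul_le_mul_of_nonneg_right (hΔ t) (eNorm_nonneg _)
    rw [deriv_lyapunov_eq hMdiff he (hMsymm t) (hMinv t) (hdyn t), ← sq_eNorm]
    nlinarith
  refine ⟨hbound, fun hkγ t ht => (hbound t).trans_lt (neg_mul_sq_add_mul_neg ?_ ?_ ht)⟩
  · linarith
  · have hε : 0 ≤ ε := (eNorm_nonneg _).trans (hΔ t)
    positivity

/-- robustness estimate. Under a bounded disturbance `‖Δ‖ ≤ ε`, the
Lyapunov derivative satisfies `V̇ ≤ -(2k - γ)‖e‖² + 2kε‖e‖`; in particular if `2k > γ`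
then `V̇ < 0` whenever `‖e‖ > 2kε/(2k - γ)`. -/
theorem lyapunov_robustness_estimate
    (k γ ε : ℝ) (hε : 0 ≤ ε) (hk : 0 < k)
    (M : ℝ → Matrix (Fin 6) (Fin 6) ℝ)
    (hMdiff : ∀ i j, Differentiable ℝ fun t => M t i j)
    (hMsymm : ∀ t, (M t).IsSymm)
    (hMinv : ∀ t, IsUnit (M t).det)
    (hMrate : ∀ t, ∀ x : Fin 6 → ℝ, |x ⬝ᵥ (matDeriv M t).mulVec x| ≤ γ * eNorm x ^ 2)
    (Δ : ℝ → Fin 6 → ℝ) (hΔ : ∀ t, eNorm (Δ t) ≤ ε)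
    (e : ℝ → Fin 6 → ℝ) (he : Differentiable ℝ e)
    (hdyn : ∀ t, deriv e t = (-k) • (M t)⁻¹.mulVec (e t) - k • (M t)⁻¹.mulVec (Δ t)) :
    (∀ t, deriv (fun s => e s ⬝ᵥ (M s).mulVec (e s)) t
        ≤ -(2 * k - γ) * eNorm (e t) ^ 2 + 2 * k * ε * eNorm (e t)) ∧
    (2 * k > γ → ∀ t, eNorm (e t) > 2 * k * ε / (2 * k - γ) →
        deriv (fun s => e s ⬝ᵥ (M s).mulVec (e s)) t < 0) :=
  lyapunov_robustness_estimate_general k γ ε hk M hMdiff hMsymm hMinv hMrate Δ hΔ e he hdyn
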